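/- arXiv:2408.09359 — 2 statements merged into one kernel-verified Lean document; each statement's English description precedes it below -/
import Mathlib

section
/- Let G be a finitely generated abelian group and g ∈ G. If g is not a torsion element, then for every prime p the quotient map induces an isomorphism of p-primary torsion parts only up to the interleaving condition: the pair (G(p), (G/ℤg)(p)) satisfies (**), i.e., the exponents of I((G/ℤg)(p)) not common with I(G(p)) strictly interleave below those of I(G(p)) not common with I((G/ℤg)(p)), with the largest leftover exponent coming from (G/ℤg)(p). -/
/-- `S` is the multiset of exponents of the finite abelian `p`-group `A`, i.e.
`A ≅ ⊕_{m ∈ S} ℤ/p^mℤ` with all exponents `≥ 1`. -/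
def IsExpMultiset (p : ℕ) (A : Type*) [AddCommGroup A] (S : Multiset ℕ) : Prop :=
  (∀ m ∈ S, 1 ≤ m) ∧
    ∃ l : List ℕ, (l : Multiset ℕ) = S ∧
      Nonempty (A ≃+ ((i : Fin l.length) → ZMod (p ^ l.get i)))

/-- The elements of a multiset of naturals listed in (weakly) decreasing order. -/
def sortDesc (s : Multiset ℕ) : List ℕ := (s.sort (· ≤ ·)).reverse

/-- The interleaving condition `(**)`: for (decreasingly sorted) lists
`bs = [b₁, b₂, …]` and `as = [a₁, a₂, …]`, one has `b₁ > a₁ > b₂ > a₂ > ⋯`. -/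
def Interleave (bs as : List ℕ) : Prop :=
  as.length ≤ bs.length ∧ bs.length ≤ as.length + 1 ∧
    (∀ i < as.length, as.getD i 0 < bs.getD i 0) ∧
    (∀ i, i + 1 < bs.length → bs.getD (i + 1) 0 < as.getD i 0)

/-!
Write `Q = G ⧸ ℤg` and `X[n]` for the `n`-torsion of `X`. A point `y ∈ Q[n]` lifts to some
`x ∈ G` with `n • x = c • g`, where `c` is unique up to `nℤ` because `g` has infinite order;
`y ↦ c mod n` is a homomorphism `Q[n] → ℤ/n` whose kernel is the isomorphic image of `G[n]`
and whose image has order `n / d`, with `d` the order of `g` in `G ⧸ nG`. Hence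
`|Q[n]| d = |G[n]| n`.

For `n = p^k` the torsion orders are `p ^ ∑ min(k, m)` over the exponents `m`, and `d = p^(e k)`
with `e (k + 1) - e k ∈ {0, 1}`. Comparing `k` and `k + 1` shows that, for every `k`, `Q(p)` has
as many or one more exponents `≥ k` than `G(p)`. Cancelling the common exponents, this counting
condition is exactly the interleaving of the leftover exponents.
-/

theorem List.Pairwise.lt_countP_le_iff {l : List ℕ} (hl : l.Pairwise (· ≥ ·)) (k i : ℕ) :
    i < l.countP (k ≤ ·) ↔ ∃ h : i < l.length, k ≤ l[i] := by
  induction l generalizing i with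
  | nil => simp
  | cons x xs ih =>
    rw [List.pairwise_cons] at hl
    by_cases hkx : k ≤ x
    · cases i with
      | zero => simp [hkx]
      | succ i => simp [hkx, ih hl.2]
    · have hlt : ∀ a ∈ x :: xs, a < k := by
        simp only [List.mem_cons, forall_eq_or_imp]
        exact ⟨by omega, fun a ha => by have := hl.1 a ha; omega⟩
      have h0 : xs.countP (k ≤ ·) = 0 :=
        List.countP_eq_zero.2 fun a ha => by simpa using hlt a (List.mem_cons_of_mem x ha)
      simp only [List.countP_cons, h0, hkx, decide_false]
      simpa using fun hi => hlt _ (List.getElem_mem hi)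

theorem pairwise_sortDesc (s : Multiset ℕ) : (sortDesc s).Pairwise (· ≥ ·) :=
  List.pairwise_reverse.2 (s.pairwise_sort _)

@[simp]
theorem coe_sortDesc (s : Multiset ℕ) : (sortDesc s : Multiset ℕ) = s := by
  rw [sortDesc, Multiset.coe_reverse, Multiset.sort_eq]

@[simp]
theorem mem_sortDesc {s : Multiset ℕ} {x : ℕ} : x ∈ sortDesc s ↔ x ∈ s := by
  rw [← Multiset.mem_coe, coe_sortDesc]

theorem lt_countP_le_iff_sortDesc (s : Multiset ℕ) (k i : ℕ) :
    i < s.countP (k ≤ ·) ↔ ∃ h : i < (sortDesc s).length, k ≤ (sortDesc s)[i] := by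
  rw [← (pairwise_sortDesc s).lt_countP_le_iff, ← Multiset.coe_countP, coe_sortDesc]

theorem length_sortDesc (s : Multiset ℕ) : (sortDesc s).length = s.countP (0 ≤ ·) := by
  rw [Multiset.countP_eq_card.2 fun _ _ => Nat.zero_le _, ← Multiset.coe_card, coe_sortDesc]

theorem interleave_sortDesc_of_disjoint {B A : Multiset ℕ} (hBA : Disjoint B A)
    (hcount : ∀ k, A.countP (k ≤ ·) ≤ B.countP (k ≤ ·) ∧
      B.countP (k ≤ ·) ≤ A.countP (k ≤ ·) + 1) :
    Interleave (sortDesc B) (sortDesc A) := by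
  refine ⟨?_, ?_, fun i hi => ?_, fun i hi => ?_⟩
  · simpa only [length_sortDesc] using (hcount 0).1
  · simpa only [length_sortDesc] using (hcount 0).2
  · obtain ⟨hiB, hle⟩ := (lt_countP_le_iff_sortDesc B _ i).1 <|
      ((lt_countP_le_iff_sortDesc A _ i).2 ⟨hi, le_rfl⟩).trans_le (hcount _).1
    rw [List.getD_eq_getElem _ _ hi, List.getD_eq_getElem _ _ hiB]
    refine lt_of_le_of_ne hle fun h => Multiset.disjoint_left.1 hBA
      (mem_sortDesc.1 (List.getElem_mem hiB)) (h ▸ mem_sortDesc.1 (List.getElem_mem hi))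
  · have := (lt_countP_le_iff_sortDesc B _ (i + 1)).2 ⟨hi, le_rfl⟩
    obtain ⟨hiA, hle⟩ := (lt_countP_le_iff_sortDesc A ((sortDesc B)[i + 1]) i).1 <| by
      have := (hcount ((sortDesc B)[i + 1])).2
      omega
    rw [List.getD_eq_getElem _ _ hi, List.getD_eq_getElem _ _ hiA]
    refine lt_of_le_of_ne hle fun h => Multiset.disjoint_left.1 hBA
      (mem_sortDesc.1 (List.getElem_mem hi)) (h ▸ mem_sortDesc.1 (List.getElem_mem hiA))

theorem interleave_sortDesc_sub {A B : Multiset ℕ}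
    (hcount : ∀ k, A.countP (k ≤ ·) ≤ B.countP (k ≤ ·) ∧
      B.countP (k ≤ ·) ≤ A.countP (k ≤ ·) + 1) :
    Interleave (sortDesc (B - A)) (sortDesc (A - B)) := by
  classical
  refine interleave_sortDesc_of_disjoint ?_ fun k => ?_
  · refine Multiset.disjoint_left.2 fun ha hb => ?_
    rw [← Multiset.count_pos, Multiset.count_sub] at ha hb
    omega
  · have hA := congrArg (Multiset.countP (k ≤ ·)) (Multiset.sub_add_inter A B)
    have hB := congrArg (Multiset.countP (k ≤ ·)) (Multiset.sub_add_inter B A)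
    rw [Multiset.countP_add] at hA hB
    rw [Multiset.inter_comm] at hB
    have := hcount k
    omega

open AddSubgroup

theorem Nat.gcd_pow_pow (p a b : ℕ) : (p ^ a).gcd (p ^ b) = p ^ min a b := by
  rcases le_total a b with h | h
  · rw [min_eq_left h, Nat.gcd_eq_left (pow_dvd_pow p h)]
  · rw [min_eq_right h, Nat.gcd_eq_right (pow_dvd_pow p h)]

theorem card_torsionBy_zmod (n m : ℕ) [NeZero n] :
    Nat.card (torsionBy (ZMod n) m) = n.gcd m := by
  have hker : torsionBy (ZMod n) m = (nsmulAddMonoidHom m).ker := by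
    ext; simp
  rw [hker, IsAddCyclic.card_nsmulAddMonoidHom_ker, Nat.card_zmod]

theorem card_torsionBy_congr {A B : Type*} [AddCommGroup A] [AddCommGroup B] (e : A ≃+ B)
    (n : ℕ) : Nat.card (torsionBy A n) = Nat.card (torsionBy B n) :=
  Nat.card_congr <| e.toEquiv.subtypeEquiv fun x => by simp [← map_nsmul]

theorem card_torsionBy_pi {ι : Type*} [Fintype ι] (A : ι → Type*) [∀ i, AddCommGroup (A i)]
    (n : ℕ) : Nat.card (torsionBy (∀ i, A i) n) = ∏ i, Nat.card (torsionBy (A i) n) := by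
  rw [← Nat.card_pi]
  exact Nat.card_congr <|
    (Equiv.subtypeEquivRight fun x => by simp [funext_iff]).trans Equiv.subtypePiEquivPi

theorem IsExpMultiset.card_torsionBy {p : ℕ} {A : Type*} [AddCommGroup A] {S : Multiset ℕ}
    (hS : IsExpMultiset p A S) (hp : p ≠ 0) (k : ℕ) :
    Nat.card (torsionBy A (p ^ k : ℕ)) = p ^ (S.map (min k)).sum := by
  obtain ⟨-, l, rfl, ⟨e⟩⟩ := hS
  have (m : ℕ) : NeZero (p ^ m) := ⟨pow_ne_zero m hp⟩
  rw [card_torsionBy_congr e, card_torsionBy_pi]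
  simp_rw [card_torsionBy_zmod, Nat.gcd_pow_pow, Finset.prod_pow_eq_pow_sum, min_comm _ k]
  rw [← List.sum_ofFn, Multiset.map_coe, Multiset.sum_coe]
  simp only [List.get_eq_getElem, List.ofFn_getElem_eq_map]

theorem card_torsionBy_primaryComponent (G : Type*) [AddCommGroup G] (p k : ℕ) :
    Nat.card (torsionBy (AddCommGroup.primaryComponent G p) (p ^ k : ℕ)) =
      Nat.card (torsionBy G (p ^ k : ℕ)) :=
  Nat.card_congr
    { toFun x :=
        ⟨x.1.1, torsionBy.nsmul_iff.2 (congrArg Subtype.val (torsionBy.nsmul_iff.1 x.2))⟩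
      invFun y := ⟨⟨y.1, k, torsionBy.nsmul_iff.1 y.2⟩,
        torsionBy.nsmul_iff.2 (Subtype.ext (torsionBy.nsmul_iff.1 y.2))⟩
      left_inv _ := rfl
      right_inv _ := rfl }

theorem Multiset.sum_map_min_succ (S : Multiset ℕ) (k : ℕ) :
    (S.map (min (k + 1))).sum = (S.map (min k)).sum + S.countP (k + 1 ≤ ·) := by
  induction S using Multiset.induction_on with
  | empty => simp
  | cons a S ih =>
    simp only [Multiset.map_cons, Multiset.sum_cons, Multiset.countP_cons, ih]
    split_ifs <;> omega

section Connecting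

variable {G : Type*} [AddCommGroup G]

noncomputable def addOrderOfMod (g : G) (n : ℕ) : ℕ :=
  addOrderOf (g : G ⧸ (nsmulAddMonoidHom n : G →+ G).range)

theorem addOrderOfMod_dvd_iff {g : G} {n : ℕ} {c : ℤ} :
    (addOrderOfMod g n : ℤ) ∣ c ↔ ∃ x : G, n • x = c • g := by
  rw [addOrderOfMod, addOrderOf_dvd_iff_zsmul_eq_zero, ← QuotientAddGroup.mk_zsmul,
    QuotientAddGroup.eq_zero_iff, AddMonoidHom.mem_range]
  simp only [nsmulAddMonoidHom_apply]

theorem addOrderOfMod_dvd_self (g : G) (n : ℕ) : addOrderOfMod g n ∣ n :=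
  Int.natCast_dvd_natCast.1 (addOrderOfMod_dvd_iff.2 ⟨g, (natCast_zsmul g n).symm⟩)

theorem addOrderOfMod_dvd_of_dvd (g : G) {m n : ℕ} (h : n ∣ m) :
    addOrderOfMod g n ∣ addOrderOfMod g m := by
  obtain ⟨l, rfl⟩ := h
  obtain ⟨x, hx⟩ := addOrderOfMod_dvd_iff.1 (dvd_refl (addOrderOfMod g (n * l) : ℤ))
  exact Int.natCast_dvd_natCast.1 <|
    addOrderOfMod_dvd_iff.2 ⟨l • x, by rw [← mul_nsmul', hx]⟩

theorem addOrderOfMod_mul_dvd (g : G) (m n : ℕ) :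
    addOrderOfMod g (m * n) ∣ m * addOrderOfMod g n := by
  obtain ⟨x, hx⟩ := addOrderOfMod_dvd_iff.1 (dvd_refl (addOrderOfMod g n : ℤ))
  refine Int.natCast_dvd_natCast.1 (addOrderOfMod_dvd_iff.2 ⟨x, ?_⟩)
  rw [mul_nsmul', hx, ← natCast_zsmul, smul_smul]
  push_cast
  rfl

theorem exists_addOrderOfMod_prime_pow (g : G) {p : ℕ} (hp : p.Prime) :
    ∃ e : ℕ → ℕ, (∀ k, addOrderOfMod g (p ^ k) = p ^ e k) ∧
      ∀ k, e k ≤ e (k + 1) ∧ e (k + 1) ≤ e k + 1 := by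
  choose e _ he using fun k => (Nat.dvd_prime_pow hp).1 (addOrderOfMod_dvd_self g (p ^ k))
  refine ⟨e, he, fun k => ⟨?_, ?_⟩⟩
  · rw [← Nat.pow_dvd_pow_iff_le_right hp.one_lt, ← he k, ← he (k + 1)]
    exact addOrderOfMod_dvd_of_dvd g (pow_dvd_pow p k.le_succ)
  · rw [← Nat.pow_dvd_pow_iff_le_right hp.one_lt, ← he (k + 1), pow_succ', pow_succ', ← he k]
    exact addOrderOfMod_mul_dvd g p (p ^ k)

variable {g : G}

theorem exists_lift_of_mem_torsionBy {n : ℕ} {y : G ⧸ zmultiples g}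
    (hy : y ∈ torsionBy (G ⧸ zmultiples g) n) :
    ∃ c : ℤ, ∃ x : G, (x : G ⧸ zmultiples g) = y ∧ n • x = c • g := by
  obtain ⟨x, rfl⟩ := QuotientAddGroup.mk_surjective y
  have hx : n • x ∈ zmultiples g := by
    rw [← QuotientAddGroup.eq_zero_iff, QuotientAddGroup.mk_nsmul]
    exact torsionBy.nsmul_iff.1 hy
  obtain ⟨c, hc⟩ := hx
  exact ⟨c, x, rfl, hc.symm⟩

theorem intCast_eq_of_nsmul_eq_zsmul (hg : ¬ IsOfFinAddOrder g) {n : ℕ} {x x' : G} {c c' : ℤ}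
    (hxx' : (x : G ⧸ zmultiples g) = x') (hc : n • x = c • g) (hc' : n • x' = c' • g) :
    (c : ZMod n) = c' := by
  obtain ⟨m, hm : m • g = -x + x'⟩ := QuotientAddGroup.eq.1 hxx'
  have : c' = c + n * m := injective_zsmul_iff_not_isOfFinAddOrder.2 hg <| by
    simp only
    rw [add_zsmul, mul_zsmul, hm, natCast_zsmul, ← hc, ← hc', ← nsmul_add,
      add_neg_cancel_left]
  rw [this]
  simp

/-- The snake-lemma connecting map for `n • ·` on `0 → ℤ → G → G ⧸ ℤg → 0`. -/
noncomputable def connectingHom (hg : ¬ IsOfFinAddOrder g) (n : ℕ) :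
    torsionBy (G ⧸ zmultiples g) n →+ ZMod n :=
  AddMonoidHom.mk' (fun y => (exists_lift_of_mem_torsionBy y.2).choose) fun y y' => by
    obtain ⟨x, hx, hc⟩ := (exists_lift_of_mem_torsionBy y.2).choose_spec
    obtain ⟨x', hx', hc'⟩ := (exists_lift_of_mem_torsionBy y'.2).choose_spec
    obtain ⟨x'', hx'', hc''⟩ := (exists_lift_of_mem_torsionBy (y + y').2).choose_spec
    rw [← Int.cast_add]
    refine intCast_eq_of_nsmul_eq_zsmul hg ?_ hc'' (x' := x + x') ?_
    · rw [hx'', QuotientAddGroup.mk_add, hx, hx']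
      rfl
    · rw [nsmul_add, hc, hc', add_zsmul]

theorem connectingHom_apply (hg : ¬ IsOfFinAddOrder g) {n : ℕ}
    {y : torsionBy (G ⧸ zmultiples g) n} {x : G} {c : ℤ}
    (hx : (x : G ⧸ zmultiples g) = y) (hc : n • x = c • g) : connectingHom hg n y = c := by
  obtain ⟨x₀, hx₀, hc₀⟩ := (exists_lift_of_mem_torsionBy y.2).choose_spec
  exact intCast_eq_of_nsmul_eq_zsmul hg (hx₀.trans hx.symm) hc₀ hc

theorem card_ker_connectingHom (hg : ¬ IsOfFinAddOrder g) {n : ℕ} (hn : n ≠ 0) :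
    Nat.card (connectingHom hg n).ker = Nat.card (torsionBy G n) := by
  let f : torsionBy G n → (connectingHom hg n).ker := fun x =>
    ⟨⟨x.1, torsionBy.nsmul_iff.2 <| by
        rw [← QuotientAddGroup.mk_nsmul, torsionBy.nsmul_iff.1 x.2, QuotientAddGroup.mk_zero]⟩,
      by rw [AddMonoidHom.mem_ker, connectingHom_apply hg rfl (c := 0)
        (by rw [torsionBy.nsmul_iff.1 x.2, zero_zsmul]), Int.cast_zero]⟩
  refine (Nat.card_eq_of_bijective f ⟨fun x x' hxx' => ?_, fun y => ?_⟩).symm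
  · obtain ⟨m, hm : m • g = -x.1 + x'.1⟩ :=
      QuotientAddGroup.eq.1 (congrArg (fun y => y.1.1) hxx')
    have hnm : (n * m : ℤ) = 0 := injective_zsmul_iff_not_isOfFinAddOrder.2 hg <| by
      simp only
      rw [mul_zsmul, hm, natCast_zsmul, nsmul_add, smul_neg, torsionBy.nsmul_iff.1 x.2,
        torsionBy.nsmul_iff.1 x'.2, neg_zero, add_zero, zero_zsmul]
    obtain rfl : m = 0 := by simpa [hn] using hnm
    rw [zero_zsmul, eq_comm, neg_add_eq_zero] at hm
    exact Subtype.ext hm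
  · obtain ⟨c, x, hx, hc⟩ := exists_lift_of_mem_torsionBy y.1.2
    obtain ⟨m, rfl⟩ : (n : ℤ) ∣ c := (ZMod.intCast_zmod_eq_zero_iff_dvd c n).1 <| by
      rw [← connectingHom_apply hg hx hc]
      exact y.2
    refine ⟨⟨x - m • g, torsionBy.nsmul_iff.2 ?_⟩, ?_⟩
    · rw [nsmul_sub, hc, mul_zsmul, natCast_zsmul, sub_self]
    · refine Subtype.ext (Subtype.ext ?_)
      show ((x - m • g : G) : G ⧸ zmultiples g) = y
      rw [QuotientAddGroup.mk_sub, hx, sub_eq_self, QuotientAddGroup.eq_zero_iff]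
      exact zsmul_mem (mem_zmultiples g) m

theorem range_connectingHom (hg : ¬ IsOfFinAddOrder g) (n : ℕ) :
    (connectingHom hg n).range = zmultiples (addOrderOfMod g n : ZMod n) := by
  ext z
  constructor
  · rintro ⟨y, rfl⟩
    obtain ⟨c, x, hx, hc⟩ := exists_lift_of_mem_torsionBy y.2
    obtain ⟨m, rfl⟩ := addOrderOfMod_dvd_iff.2 ⟨x, hc⟩
    rw [connectingHom_apply hg hx hc]
    exact ⟨m, by push_cast; rw [zsmul_eq_mul, mul_comm]⟩
  · rintro ⟨m, rfl⟩
    obtain ⟨x, hx⟩ := addOrderOfMod_dvd_iff.1 (dvd_mul_right (addOrderOfMod g n : ℤ) m)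
    refine ⟨⟨x, torsionBy.nsmul_iff.2 ?_⟩, ?_⟩
    · rw [← QuotientAddGroup.mk_nsmul, hx, QuotientAddGroup.eq_zero_iff]
      exact zsmul_mem (mem_zmultiples g) _
    · rw [connectingHom_apply hg rfl hx]
      push_cast
      rw [zsmul_eq_mul, mul_comm]

theorem card_range_connectingHom_mul (hg : ¬ IsOfFinAddOrder g) {n : ℕ} (hn : n ≠ 0) :
    Nat.card (connectingHom hg n).range * addOrderOfMod g n = n := by
  rw [range_connectingHom, Nat.card_zmultiples, ZMod.addOrderOf_coe _ hn,
    Nat.gcd_eq_right (addOrderOfMod_dvd_self g n),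
    Nat.div_mul_cancel (addOrderOfMod_dvd_self g n)]

theorem card_torsionBy_quotient_mul_addOrderOfMod (hg : ¬ IsOfFinAddOrder g) {n : ℕ}
    (hn : n ≠ 0) :
    Nat.card (torsionBy (G ⧸ zmultiples g) n) * addOrderOfMod g n =
      Nat.card (torsionBy G n) * n := by
  rw [← (connectingHom hg n).ker.card_mul_index, index_ker, card_ker_connectingHom hg hn,
    mul_assoc, card_range_connectingHom_mul hg hn]

end Connecting

theorem interleave_of_not_torsion_general (G : Type*) [AddCommGroup G] (g : G)
    (hg : ¬ IsOfFinAddOrder g) (p : ℕ) [Fact p.Prime] (SG SQ : Multiset ℕ)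
    (hSG : IsExpMultiset p (AddCommGroup.primaryComponent G p) SG)
    (hSQ : IsExpMultiset p
      (AddCommGroup.primaryComponent (G ⧸ AddSubgroup.zmultiples g) p) SQ) :
    Interleave (sortDesc (SQ - SG)) (sortDesc (SG - SQ)) := by
  have hp : p.Prime := Fact.out
  obtain ⟨e, he, he_succ⟩ := exists_addOrderOfMod_prime_pow g hp
  have hexp (k : ℕ) : (SQ.map (min k)).sum + e k = (SG.map (min k)).sum + k := by
    have h := card_torsionBy_quotient_mul_addOrderOfMod hg (pow_ne_zero k hp.ne_zero)
    rw [← card_torsionBy_primaryComponent G, ← card_torsionBy_primaryComponent (G ⧸ _),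
      hSG.card_torsionBy hp.ne_zero, hSQ.card_torsionBy hp.ne_zero, he, ← pow_add,
      ← pow_add] at h
    exact Nat.pow_right_injective hp.two_le h
  have hcount_succ (k : ℕ) : SG.countP (k + 1 ≤ ·) ≤ SQ.countP (k + 1 ≤ ·) ∧
      SQ.countP (k + 1 ≤ ·) ≤ SG.countP (k + 1 ≤ ·) + 1 := by
    have := hexp k
    have h₁ := hexp (k + 1)
    rw [Multiset.sum_map_min_succ, Multiset.sum_map_min_succ] at h₁
    have := he_succ k
    omega
  have hcount_zero {S : Multiset ℕ} (hS : ∀ m ∈ S, 1 ≤ m) :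
      S.countP (0 ≤ ·) = S.countP (1 ≤ ·) :=
    (Multiset.countP_eq_card.2 fun _ _ => Nat.zero_le _).trans (Multiset.countP_eq_card.2 hS).symm
  refine interleave_sortDesc_sub fun k => ?_
  cases k with
  | zero => simpa only [hcount_zero hSG.1, hcount_zero hSQ.1] using hcount_succ 0
  | succ k => exact hcount_succ k

/-- If `g` is a non-torsion element of the finitely generated abelian group `G`, then for
every prime `p` the pair `(G(p), (G/ℤg)(p))` of `p`-primary components satisfies the
interleaving condition `(**)`: the leftover exponents strictly interleave as
`b₁ > a₁ > b₂ > a₂ > ⋯` with the `b`'s coming from `(G/ℤg)(p)` and the `a`'s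
from `G(p)`, so the largest leftover exponent comes from `(G/ℤg)(p)`. -/
theorem interleave_of_not_torsion (G : Type*) [AddCommGroup G] [AddGroup.FG G] (g : G)
    (hg : ¬ IsOfFinAddOrder g) (p : ℕ) [Fact p.Prime] (SG SQ : Multiset ℕ)
    (hSG : IsExpMultiset p (AddCommGroup.primaryComponent G p) SG)
    (hSQ : IsExpMultiset p
      (AddCommGroup.primaryComponent (G ⧸ AddSubgroup.zmultiples g) p) SQ) :
    Interleave (sortDesc (SQ - SG)) (sortDesc (SG - SQ)) :=
  interleave_of_not_torsion_general G g hg p SG SQ hSG hSQ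
end

section
/- Given a finite multiset S of positive integers (the exponent multiset of T ⊕ T/C for a finite abelian p-group T and cyclic subgroup C with torsion generator), the groups T and T/C are recoverable: letting {c_1 > c_2 > ... > c_{2m}} be the values of odd multiplicity in S, the exponent multiset of T is obtained from the common part (half of S minus the odd-multiplicity values) together with {c_1, c_3, ..., c_{2m−1}}, and that of T/C with {c_2, c_4, ..., c_{2m}}. In particular, T ⊕ (T/C) determines the ordered pair (T, T/C) up to isomorphism. -/
/-- The values occurring with odd multiplicity in `S`, listed in decreasing order
`c₁ > c₂ > ⋯`. -/
def oddList (S : Multiset ℕ) : List ℕ :=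
  sortDesc (S.toFinset.val.filter fun n => Odd (S.count n))

/-!
Write `r k = |p^k T ∩ C|`. Since `p^k (T/C) = (p^k T + C)/C`, we have
`|p^k T| = |p^k (T/C)| · r k`, and `|p^k M| = p ^ ∑_{m ∈ I(M)} (m - k)` for every `M`. As `C` is
cyclic, multiplication by `p` maps `p^k T ∩ C` into `p^(k+1) T ∩ C` with kernel of order at most
`p`, so `r (k+1) ≤ r k ≤ p · r (k+1)`. Comparing consecutive `k` shows that, for every `n`,
`I(T)` has as many exponents `≥ n` as `I(T/C)`, or exactly one more: the interleaving condition.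

Under this condition the multiplicities of `n` in `I(T)` and `I(T/C)` differ by at most one, so
`I(T) - I(T/C)` and `I(T/C) - I(T)` together consist of the odd-multiplicity values
`c₁ > c₂ > ⋯` of the sum, and interleaving forces them to take these values alternately,
starting with `c₁` in `I(T)`. The number of exponents `≥ n` in `I(T)` is the upper half of
the corresponding number for the sum, which gives uniqueness.
-/

open Multiset

lemma Multiset.countP_le_eq_count_add (X : Multiset ℕ) (n : ℕ) :
    X.countP (n ≤ ·) = X.count n + X.countP (n + 1 ≤ ·) := by
  induction X using Multiset.induction with
  | empty => simp
  | cons a X ih =>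
    rw [countP_cons, countP_cons, count_cons, ih]
    split_ifs <;> omega

lemma Multiset.eq_of_forall_countP_le_eq {X Y : Multiset ℕ}
    (h : ∀ n, X.countP (n ≤ ·) = Y.countP (n ≤ ·)) : X = Y := by
  refine Multiset.ext.2 fun n => ?_
  have h₀ := h n
  have h₁ := h (n + 1)
  rw [countP_le_eq_count_add X, countP_le_eq_count_add Y] at h₀
  omega

lemma Multiset.sum_map_tsub_eq_countP_add (X : Multiset ℕ) (k : ℕ) :
    (X.map (· - k)).sum = X.countP (k + 1 ≤ ·) + (X.map (· - (k + 1))).sum := by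
  induction X using Multiset.induction with
  | empty => simp
  | cons a X ih =>
    rw [map_cons, map_cons, sum_cons, sum_cons, countP_cons, ih]
    split_ifs <;> omega

lemma coe_oddList (S : Multiset ℕ) :
    (oddList S : Multiset ℕ) = S.toFinset.val.filter fun n => Odd (S.count n) := by
  rw [oddList, sortDesc, coe_reverse, sort_eq]

lemma count_oddList (S : Multiset ℕ) (n : ℕ) :
    count n (oddList S : Multiset ℕ) = S.count n % 2 := by
  rw [coe_oddList, count_filter, count_eq_of_nodup S.toFinset.nodup]
  rcases Nat.even_or_odd (S.count n) with h | h
  · simp [Nat.not_odd_iff_even.2 h, Nat.even_iff.1 h]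
  · simp [h, Nat.odd_iff.1 h, count_pos.1 h.pos]

lemma sortedGT_oddList (S : Multiset ℕ) : (oddList S).SortedGT := by
  have hnodup : (oddList S).Nodup := by
    rw [← coe_nodup, coe_oddList]
    exact S.toFinset.nodup.filter _
  exact (pairwise_sort _ _).sortedLE.reverse.sortedGT_of_nodup hnodup

/-- `L[0], L[2], L[4], …`, in the form used by the statement of `reconstruction`. -/
def evens (L : List ℕ) : List ℕ :=
  List.ofFn fun i : Fin ((L.length + 1) / 2) => L.getD (2 * (i : ℕ)) 0

def odds (L : List ℕ) : List ℕ :=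
  List.ofFn fun i : Fin (L.length / 2) => L.getD (2 * (i : ℕ) + 1) 0

lemma evens_cons (a : ℕ) (L : List ℕ) : evens (a :: L) = a :: odds L := by
  refine List.ext_getElem (by simp [evens, odds]; omega) fun i h₁ h₂ => ?_
  cases i <;> simp [evens, odds, Nat.mul_succ]

lemma odds_cons (a : ℕ) (L : List ℕ) : odds (a :: L) = evens L := by
  refine List.ext_getElem (by simp [evens, odds]) fun i h₁ h₂ => ?_
  simp [evens, odds]

/-- The interleaving condition `(**)`, phrased through the tail counts `#{x ∈ B | n ≤ x}`. -/
def Interlaces (B A : Multiset ℕ) : Prop :=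
  ∀ n, A.countP (n ≤ ·) ≤ B.countP (n ≤ ·) ∧ B.countP (n ≤ ·) ≤ A.countP (n ≤ ·) + 1

namespace Interlaces

variable {B A : Multiset ℕ}

lemma countP_le_eq_ceil_half (h : Interlaces B A) (n : ℕ) :
    B.countP (n ≤ ·) = ((B + A).countP (n ≤ ·) + 1) / 2 := by
  have := h n
  rw [countP_add]
  omega

lemma eq_of_add_eq {B' A' : Multiset ℕ} (h : Interlaces B A) (h' : Interlaces B' A')
    (hS : B + A = B' + A') : B = B' ∧ A = A' := by
  have hB : B = B' := eq_of_forall_countP_le_eq fun n => by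
    rw [h.countP_le_eq_ceil_half, h'.countP_le_eq_ceil_half, hS]
  exact ⟨hB, by rwa [hB, add_right_inj] at hS⟩

lemma sub (h : Interlaces B A) : Interlaces (B - A) (A - B) := by
  intro n
  have hB := congrArg (countP (n ≤ ·)) (sub_add_inter B A)
  have hA := congrArg (countP (n ≤ ·)) (sub_add_inter A B)
  rw [countP_add] at hB hA
  rw [inter_comm] at hA
  have := h n
  omega

lemma sub_add_sub (h : Interlaces B A) : (B - A) + (A - B) = oddList (B + A) := by
  refine Multiset.ext.2 fun n => ?_
  have h₀ := h n
  have h₁ := h (n + 1)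
  rw [countP_le_eq_count_add B, countP_le_eq_count_add A] at h₀
  rw [count_add, count_sub, count_sub, count_oddList, count_add]
  omega

lemma inter_add_inter (h : Interlaces B A) : A ∩ B + A ∩ B = B + A - oddList (B + A) := by
  rw [← h.sub_add_sub]
  ext n
  simp only [count_add, count_inter, count_sub]
  omega

/-- The largest entry `a` of `L` must lie in `X`, and removing it from `X` swaps the roles of
`X` and `Y`. -/
theorem eq_evens_odds {L : List ℕ} (hL : L.SortedGT) {X Y : Multiset ℕ}
    (h : Interlaces X Y) (hXY : X + Y = L) : X = evens L ∧ Y = odds L := by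
  induction L generalizing X Y with
  | nil =>
    obtain ⟨rfl, rfl⟩ := add_eq_zero.1 hXY
    exact ⟨rfl, rfl⟩
  | cons a L ih =>
    obtain ⟨ha, hL⟩ := List.pairwise_cons.1 hL.pairwise
    have haY : a ∉ Y := fun haY => by
      have := h a
      have hX : X.countP (a ≤ ·) + Y.countP (a ≤ ·) = 1 := by
        rw [← countP_add, hXY, ← cons_coe, countP_cons_of_pos _ le_rfl, countP_eq_zero.2]
        exact fun b hb => not_le.2 (ha b hb)
      have := countP_pos_of_mem (p := (a ≤ ·)) haY le_rfl
      omega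
    obtain ⟨X', rfl⟩ := exists_cons_of_mem
      ((mem_add.1 (hXY ▸ mem_coe.2 List.mem_cons_self)).resolve_right haY)
    have hX'Y : X' + Y = L := by
      rwa [cons_add, ← cons_coe, cons_inj_right] at hXY
    have hYX' : Interlaces Y X' := fun n => by
      have := h n
      have hsmall : ¬ n ≤ a → X'.countP (n ≤ ·) + Y.countP (n ≤ ·) = 0 := fun hn => by
        rw [← countP_add, hX'Y, countP_eq_zero]
        exact fun b hb => by have := ha b hb; omega
      rw [countP_cons] at this
      split_ifs at this with hn
      · omega
      · have := hsmall hn; omega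
    obtain ⟨hY, hX'⟩ := ih hL.sortedGT hYX' (by rw [add_comm, hX'Y])
    rw [evens_cons, odds_cons, hX', hY]
    exact ⟨rfl, rfl⟩

end Interlaces

lemma AddSubgroup.card_eq_card_map_mul_card_inf_ker {G H : Type*} [AddGroup G] [AddGroup H]
    (K : AddSubgroup G) (f : G →+ H) :
    Nat.card K = Nat.card (K.map f) * Nat.card (K ⊓ f.ker : AddSubgroup G) := by
  rw [← (f.domRestrict K).ker.card_mul_index, AddSubgroup.index_ker,
    AddMonoidHom.domRestrict_range, AddMonoidHom.ker_domRestrict, mul_comm,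
    ← AddSubgroup.inf_addSubgroupOf_right, inf_comm,
    Nat.card_congr (AddSubgroup.addSubgroupOfEquivOfLe inf_le_left).toEquiv]

lemma IsAddCyclic.card_le_of_nsmul_eq_zero {G : Type*} [AddGroup G] [IsAddCyclic G] {n : ℕ}
    (hn : 0 < n) (h : ∀ x : G, n • x = 0) : Nat.card G ≤ n := by
  rw [← IsAddCyclic.exponent_eq_card]
  exact Nat.le_of_dvd hn (AddMonoid.exponent_dvd_of_forall_nsmul_eq_zero h)

section RangeNsmul

variable {M N : Type*} [AddCommGroup M] [AddCommGroup N]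

lemma map_range_nsmul_of_surjective {f : M →+ N} (hf : Function.Surjective f) (n : ℕ) :
    (nsmulAddMonoidHom n : M →+ M).range.map f = (nsmulAddMonoidHom n : N →+ N).range := by
  have hcomm : f.comp (nsmulAddMonoidHom n) = (nsmulAddMonoidHom n).comp f := by
    ext; simp
  rw [AddMonoidHom.map_range, hcomm, AddMonoidHom.range_comp,
    AddMonoidHom.range_eq_top_of_surjective f hf, ← AddMonoidHom.range_eq_map]

lemma card_range_nsmul_congr (e : M ≃+ N) (n : ℕ) :
    Nat.card (nsmulAddMonoidHom n : M →+ M).range =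
      Nat.card (nsmulAddMonoidHom n : N →+ N).range := by
  rw [← map_range_nsmul_of_surjective (f := (e : M →+ N)) e.surjective,
    AddSubgroup.card_map_of_injective (f := (e : M →+ N)) e.injective]

lemma card_range_nsmul_eq_card_quotient_mul (C : AddSubgroup M) (n : ℕ) :
    Nat.card (nsmulAddMonoidHom n : M →+ M).range =
      Nat.card (nsmulAddMonoidHom n : M ⧸ C →+ M ⧸ C).range *
        Nat.card ((nsmulAddMonoidHom n : M →+ M).range ⊓ C : AddSubgroup M) := by
  rw [AddSubgroup.card_eq_card_map_mul_card_inf_ker _ (QuotientAddGroup.mk' C),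
    map_range_nsmul_of_surjective (QuotientAddGroup.mk'_surjective C), QuotientAddGroup.ker_mk']

lemma card_range_nsmul_pow_inf_le_mul [Finite M] {p : ℕ} (hp : 0 < p) (C : AddSubgroup M)
    [IsAddCyclic C] (k : ℕ) :
    Nat.card ((nsmulAddMonoidHom (p ^ k) : M →+ M).range ⊓ C : AddSubgroup M) ≤
      p * Nat.card ((nsmulAddMonoidHom (p ^ (k + 1)) : M →+ M).range ⊓ C : AddSubgroup M) := by
  set D := ((nsmulAddMonoidHom (p ^ k) : M →+ M).range ⊓ C : AddSubgroup M)
  have hmap : D.map (nsmulAddMonoidHom p) ≤ (nsmulAddMonoidHom (p ^ (k + 1))).range ⊓ C := by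
    rintro _ ⟨_, ⟨⟨x, rfl⟩, hC⟩, rfl⟩
    refine ⟨⟨x, ?_⟩, C.nsmul_mem hC p⟩
    simp only [nsmulAddMonoidHom_apply, smul_smul, ← pow_succ']
  have hker : Nat.card (D ⊓ (nsmulAddMonoidHom p).ker : AddSubgroup M) ≤ p := by
    have : IsAddCyclic (D ⊓ (nsmulAddMonoidHom p).ker : AddSubgroup M) :=
      AddSubgroup.isAddCyclic_of_le (inf_le_left.trans inf_le_right)
    exact IsAddCyclic.card_le_of_nsmul_eq_zero hp fun x => Subtype.ext x.2.2
  calc Nat.card D = Nat.card (D.map (nsmulAddMonoidHom p)) *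
        Nat.card (D ⊓ (nsmulAddMonoidHom p).ker : AddSubgroup M) :=
        D.card_eq_card_map_mul_card_inf_ker _
    _ ≤ _ := by
      rw [mul_comm]
      exact Nat.mul_le_mul hker (AddSubgroup.card_le_of_le hmap)

end RangeNsmul

lemma card_range_nsmul_pi {ι : Type*} [Fintype ι] (G : ι → Type*) [∀ i, AddCommGroup (G i)]
    (n : ℕ) :
    Nat.card (nsmulAddMonoidHom n : ((i : ι) → G i) →+ _).range =
      ∏ i, Nat.card (nsmulAddMonoidHom n : G i →+ G i).range := by
  have h : ((nsmulAddMonoidHom n : ((i : ι) → G i) →+ _).range : Set ((i : ι) → G i)) =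
      Set.univ.pi fun i => ((nsmulAddMonoidHom n : G i →+ G i).range : Set (G i)) := by
    simp only [AddMonoidHom.coe_range]
    exact Set.range_piMap _
  rw [← Nat.card_pi]
  exact (congrArg (fun s : Set ((i : ι) → G i) => Nat.card s) h).trans
    (Nat.card_congr (Equiv.Set.univPi _))

lemma ZMod.card_range_nsmul_pow {p : ℕ} (hp : p ≠ 0) (m k : ℕ) :
    Nat.card (nsmulAddMonoidHom (p ^ k) : ZMod (p ^ m) →+ ZMod (p ^ m)).range =
      p ^ (m - k) := by
  have : NeZero (p ^ m) := ⟨pow_ne_zero _ hp⟩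
  rw [IsAddCyclic.card_nsmulAddMonoidHom_range, Nat.card_zmod]
  rcases le_total k m with h | h
  · rw [Nat.gcd_eq_right (pow_dvd_pow p h), Nat.pow_div h (Nat.pos_of_ne_zero hp)]
  · rw [Nat.gcd_eq_left (pow_dvd_pow p h), Nat.div_self (by positivity), Nat.sub_eq_zero_of_le h,
      pow_zero]

namespace IsExpMultiset

variable {p : ℕ} {M : Type*} [AddCommGroup M] {X : Multiset ℕ}

lemma finite (hp : p ≠ 0) (hX : IsExpMultiset p M X) : Finite M := by
  obtain ⟨-, l, -, ⟨e⟩⟩ := hX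
  have (i : Fin l.length) : NeZero (p ^ l.get i) := ⟨pow_ne_zero _ hp⟩
  exact Finite.of_equiv _ e.toEquiv.symm

lemma card_range_nsmul_pow (hp : p ≠ 0) (hX : IsExpMultiset p M X) (k : ℕ) :
    Nat.card (nsmulAddMonoidHom (p ^ k) : M →+ M).range = p ^ (X.map (· - k)).sum := by
  obtain ⟨-, l, rfl, ⟨e⟩⟩ := hX
  rw [card_range_nsmul_congr e, card_range_nsmul_pi]
  simp_rw [ZMod.card_range_nsmul_pow hp]
  rw [Finset.prod_pow_eq_pow_sum]
  exact congrArg (p ^ ·) (Fin.sum_univ_fun_getElem l (· - k))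

end IsExpMultiset

lemma le_and_le_succ_of_pow_mul_eq {p a b r s : ℕ} (hp : 1 < p) (hs : 0 < s)
    (h : p ^ b * s = p ^ a * r) (hsr : s ≤ r) (hrs : r ≤ p * s) : a ≤ b ∧ b ≤ a + 1 := by
  constructor
  · refine (Nat.pow_le_pow_iff_right hp).1 (Nat.le_of_mul_le_mul_right ?_ hs)
    calc p ^ a * s ≤ p ^ a * r := Nat.mul_le_mul_left _ hsr
      _ = p ^ b * s := h.symm
  · refine (Nat.pow_le_pow_iff_right hp).1 (Nat.le_of_mul_le_mul_right ?_ hs)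
    calc p ^ b * s = p ^ a * r := h
      _ ≤ p ^ a * (p * s) := Nat.mul_le_mul_left _ hrs
      _ = p ^ (a + 1) * s := by ring

theorem interlaces_of_isExpMultiset {p : ℕ} (hp : p.Prime) {T : Type*} [AddCommGroup T] (g : T)
    {B A : Multiset ℕ} (hB : IsExpMultiset p T B)
    (hA : IsExpMultiset p (T ⧸ AddSubgroup.zmultiples g) A) : Interlaces B A := by
  have := hB.finite hp.ne_zero
  set C := AddSubgroup.zmultiples g
  set r : ℕ → ℕ := fun k =>
    Nat.card ((nsmulAddMonoidHom (p ^ k) : T →+ T).range ⊓ C : AddSubgroup T)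
  have hcard (k : ℕ) : p ^ (B.map (· - k)).sum = p ^ (A.map (· - k)).sum * r k := by
    rw [← hB.card_range_nsmul_pow hp.ne_zero, ← hA.card_range_nsmul_pow hp.ne_zero,
      card_range_nsmul_eq_card_quotient_mul]
  have hle (k : ℕ) : r (k + 1) ≤ r k := by
    refine AddSubgroup.card_le_of_le (inf_le_inf_right C ?_)
    rintro _ ⟨x, rfl⟩
    exact ⟨p • x, by simp only [nsmulAddMonoidHom_apply, smul_smul, ← pow_succ]⟩
  have hsucc (k : ℕ) : A.countP (k + 1 ≤ ·) ≤ B.countP (k + 1 ≤ ·) ∧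
      B.countP (k + 1 ≤ ·) ≤ A.countP (k + 1 ≤ ·) + 1 := by
    refine le_and_le_succ_of_pow_mul_eq hp.one_lt Nat.card_pos ?_ (hle k)
      (card_range_nsmul_pow_inf_le_mul hp.pos C k)
    have h₀ := hcard k
    rw [sum_map_tsub_eq_countP_add B, sum_map_tsub_eq_countP_add A, pow_add, pow_add,
      hcard (k + 1)] at h₀
    refine Nat.eq_of_mul_eq_mul_left (pow_pos hp.pos (A.map (· - (k + 1))).sum) ?_
    linarith
  intro n
  cases n with
  | zero =>
    have hpos {X : Multiset ℕ} (hX : ∀ m ∈ X, 1 ≤ m) : X.countP (0 ≤ ·) = X.countP (1 ≤ ·) :=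
      countP_congr rfl fun m hm => by simp [hX m hm]
    rw [hpos hB.1, hpos hA.1]
    exact hsucc 0
  | succ k => exact hsucc k

/-- Reconstruction of `(I(T), I(T/C))` from `I(T) ⊔ I(T/C)`:
for a finite abelian `p`-group `T` with exponent multiset `B` and a cyclic subgroup
`C = ℤg` with `A` the exponent multiset of `T/C`, letting `c₁ > c₂ > ⋯` be the values of
odd multiplicity in `B ⊔ A`, the leftover part of `B = I(T)` is `{c₁, c₃, …}`, that of
`A = I(T/C)` is `{c₂, c₄, …}`, the common part satisfies
`(A ∩ B) + (A ∩ B) = (B + A) − {c₁, c₂, …}`, and `B + A` determines the ordered pair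
`(B, A)`, i.e. `T ⊕ (T/C)` determines `(T, T/C)` up to isomorphism. -/
theorem reconstruction (p : ℕ) (hp : p.Prime) (T : Type*) [AddCommGroup T] (g : T)
    (B A : Multiset ℕ) (hB : IsExpMultiset p T B)
    (hA : IsExpMultiset p (T ⧸ AddSubgroup.zmultiples g) A) :
    (B - A =
      ↑(List.ofFn fun i : Fin (((oddList (B + A)).length + 1) / 2) =>
        (oddList (B + A)).getD (2 * (i : ℕ)) 0)) ∧
    (A - B =
      ↑(List.ofFn fun i : Fin ((oddList (B + A)).length / 2) =>
        (oddList (B + A)).getD (2 * (i : ℕ) + 1) 0)) ∧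
    (A ∩ B) + (A ∩ B) = (B + A) - ↑(oddList (B + A)) ∧
    B = (A ∩ B) + (B - A) ∧ A = (A ∩ B) + (A - B) ∧
    (∀ (T' : Type*) [AddCommGroup T'] (g' : T') (B' A' : Multiset ℕ),
      IsExpMultiset p T' B' →
      IsExpMultiset p (T' ⧸ AddSubgroup.zmultiples g') A' →
      B + A = B' + A' → B = B' ∧ A = A') := by
  have hI := interlaces_of_isExpMultiset hp g hB hA
  obtain ⟨hevens, hodds⟩ := hI.sub.eq_evens_odds (sortedGT_oddList _) hI.sub_add_sub
  refine ⟨hevens, hodds, hI.inter_add_inter, by rw [inter_comm, add_comm, sub_add_inter],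
    by rw [add_comm, sub_add_inter], ?_⟩
  intro T' _ g' B' A' hB' hA' hS
  exact hI.eq_of_add_eq (interlaces_of_isExpMultiset hp g' hB' hA') hS
end
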